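/- Let G be a simple loony endgame with at least two chains of length 3 and with cv(G) < 2. If cv(G) is odd then v(G) = 1. If cv(G) is even then v(G) = 2, unless G contains a loop of length 4 and cv(G∖{4_ℓ}) = 4, in which case v(G) = 0. -/
import Mathlib


/-- A component of a dots-and-boxes endgame: a chain or a loop, with an integer length. -/
inductive Comp : Type
  | chain (c : ℤ) : Comp
  | loop (l : ℤ) : Comp
  deriving DecidableEq

/-- The length (number of boxes) of a component. -/
def Comp.len : Comp → ℤ
  | .chain c => c
  | .loop l => l

/-- A simple loony endgame: a multiset of chains of length ≥ 3 and loops of even length ≥ 4. -/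
def IsSimpleLoony (G : Multiset Comp) : Prop :=
  ∀ p ∈ G, match p with
    | .chain c => 3 ≤ c
    | .loop l => 4 ≤ l ∧ Even l

/-- Fuel-indexed value function. -/
noncomputable def vAux : ℕ → Multiset Comp → ℤ
  | 0, _ => 0
  | n + 1, G =>
    if G = 0 then 0
    else sInf { x : ℤ | ∃ p ∈ G,
      x = match p with
        | Comp.chain c => c - 2 + |vAux n (G.erase p) - 2|
        | Comp.loop l => l - 4 + |vAux n (G.erase p) - 4| }

/-- The value of a simple loony endgame: 0 on the empty game; on a nonempty game, the
minimum over components of `c - 2 + |v(G∖{c}) - 2|` for a chain of length `c` and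
`ℓ - 4 + |v(G∖{ℓ}) - 4|` for a loop of length `ℓ`. -/
noncomputable def v (G : Multiset Comp) : ℤ := vAux (Multiset.card G) G

/-- The fully controlled value: Σ_chains (c - 4) + Σ_loops (ℓ - 8). -/
def fcv (G : Multiset Comp) : ℤ :=
  (G.map (fun p => match p with
    | Comp.chain c => c - 4
    | Comp.loop l => l - 8)).sum

/-- The terminal bonus. -/
noncomputable def tb (G : Multiset Comp) : ℤ :=
  open Classical in
  if G = 0 then 0
  else if (∃ c, 4 ≤ c ∧ Comp.chain c ∈ G) ∨ (∀ l, Comp.loop l ∉ G) then 4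
  else if ∀ c, Comp.chain c ∉ G then 8
  else 6

/-- The controlled value. -/
noncomputable def cv (G : Multiset Comp) : ℤ := fcv G + tb G

/-! ### Infrastructure -/

def cand (p : Comp) (w : ℤ) : ℤ :=
  match p with
  | Comp.chain c => c - 2 + |w - 2|
  | Comp.loop l => l - 4 + |w - 4|

lemma v_zero : v 0 = 0 := rfl

lemma v_rec {G : Multiset Comp} (hG : G ≠ 0) :
    v G = sInf { x : ℤ | ∃ p ∈ G, x = cand p (v (G.erase p)) } := by
  obtain ⟨n, hn⟩ : ∃ n, Multiset.card G = n + 1 :=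
    Nat.exists_eq_succ_of_ne_zero (by simpa using hG)
  have hv : ∀ p ∈ G, vAux n (G.erase p) = v (G.erase p) := by
    intro p hp
    have : Multiset.card (G.erase p) = n := by
      rw [Multiset.card_erase_of_mem hp, hn]; rfl
    rw [v, this]
  rw [v, hn]
  show (if G = 0 then 0 else sInf _) = _
  rw [if_neg hG]
  congr 1
  ext x
  constructor
  · rintro ⟨p, hp, rfl⟩
    refine ⟨p, hp, ?_⟩
    cases p <;> simp [cand, hv _ hp]
  · rintro ⟨p, hp, rfl⟩
    refine ⟨p, hp, ?_⟩
    cases p <;> simp [cand, hv _ hp]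

lemma cand_nonneg {G : Multiset Comp} (hG : IsSimpleLoony G) {p : Comp} (hp : p ∈ G) (w : ℤ) :
    0 ≤ cand p w := by
  have := hG p hp
  cases p with
  | chain c => have : (3:ℤ) ≤ c := this
               have := abs_nonneg (w - 2); simp only [cand]; omega
  | loop l => have : (4:ℤ) ≤ l ∧ Even l := this
              have h2 := abs_nonneg (w - 4); simp only [cand]; omega

/-- The defining properties of `v` on nonempty games. -/
lemma v_spec {G : Multiset Comp} (hSL : IsSimpleLoony G) (hG : G ≠ 0) :
    (∃ p ∈ G, v G = cand p (v (G.erase p))) ∧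
    (∀ p ∈ G, v G ≤ cand p (v (G.erase p))) := by
  have hne : { x : ℤ | ∃ p ∈ G, x = cand p (v (G.erase p)) }.Nonempty := by
    obtain ⟨p, hp⟩ := Multiset.exists_mem_of_ne_zero hG
    exact ⟨cand p (v (G.erase p)), p, hp, rfl⟩
  have hbdd : BddBelow { x : ℤ | ∃ p ∈ G, x = cand p (v (G.erase p)) } := by
    refine ⟨0, ?_⟩
    rintro x ⟨p, hp, rfl⟩
    exact cand_nonneg hSL hp _
  constructor
  · have := Int.csInf_mem hne hbdd
    rw [← v_rec hG] at this
    exact this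
  · intro p hp
    rw [v_rec hG]
    exact csInf_le hbdd ⟨p, hp, rfl⟩

lemma v_le_of_mem {G : Multiset Comp} (hSL : IsSimpleLoony G) {p : Comp} (hp : p ∈ G) :
    v G ≤ cand p (v (G.erase p)) :=
  (v_spec hSL (fun h => by simp [h] at hp)).2 p hp

lemma v_ge {G : Multiset Comp} (hSL : IsSimpleLoony G) (hG : G ≠ 0) {b : ℤ}
    (hb : ∀ p ∈ G, b ≤ cand p (v (G.erase p))) : b ≤ v G := by
  rw [v_rec hG]
  apply le_csInf
  · obtain ⟨p, hp⟩ := Multiset.exists_mem_of_ne_zero hG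
    exact ⟨cand p (v (G.erase p)), p, hp, rfl⟩
  · rintro x ⟨p, hp, rfl⟩; exact hb p hp

lemma v_nonneg {G : Multiset Comp} (hSL : IsSimpleLoony G) : 0 ≤ v G := by
  rcases eq_or_ne G 0 with rfl | hG
  · simp [v_zero]
  · exact v_ge hSL hG (fun p hp => cand_nonneg hSL hp _)

lemma v_singleton (p : Comp) : v {p} = cand p 0 := by
  have h : ({p} : Multiset Comp) ≠ 0 := by simp
  rw [v_rec h]
  have : { x : ℤ | ∃ q ∈ ({p} : Multiset Comp), x = cand q (v (({p} : Multiset Comp).erase q)) }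
      = {cand p 0} := by
    ext x
    simp [Multiset.mem_singleton, v_zero]
  rw [this, csInf_singleton]
def wt (p : Comp) : ℤ :=
  match p with
  | Comp.chain c => c - 4
  | Comp.loop l => l - 8

lemma fcv_cons (p : Comp) (G : Multiset Comp) : fcv (p ::ₘ G) = wt p + fcv G := by
  cases p <;> simp [fcv, wt, Multiset.map_cons, Multiset.sum_cons]

lemma fcv_zero : fcv 0 = 0 := rfl

lemma fcv_erase {G : Multiset Comp} {p : Comp} (hp : p ∈ G) :
    fcv (G.erase p) = fcv G - wt p := by
  conv_rhs => rw [← Multiset.cons_erase hp]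
  rw [fcv_cons]; ring

/-- predicate abbreviations used in `tb` -/
def HasLong (G : Multiset Comp) : Prop := ∃ c, 4 ≤ c ∧ Comp.chain c ∈ G
def NoLoop (G : Multiset Comp) : Prop := ∀ l, Comp.loop l ∉ G
def NoChain (G : Multiset Comp) : Prop := ∀ c, Comp.chain c ∉ G

lemma tb_zero : tb 0 = 0 := by simp [tb]

lemma tb_of_four {G : Multiset Comp} (h0 : G ≠ 0) (h : HasLong G ∨ NoLoop G) : tb G = 4 := by
  unfold HasLong NoLoop at h
  rw [tb, if_neg h0, if_pos h]

lemma tb_of_eight {G : Multiset Comp} (h0 : G ≠ 0) (h : ¬(HasLong G ∨ NoLoop G))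
    (h2 : NoChain G) : tb G = 8 := by
  unfold HasLong NoLoop at h; unfold NoChain at h2
  rw [tb, if_neg h0, if_neg h, if_pos h2]

lemma tb_of_six {G : Multiset Comp} (h0 : G ≠ 0) (h : ¬(HasLong G ∨ NoLoop G))
    (h2 : ¬NoChain G) : tb G = 6 := by
  unfold HasLong NoLoop at h; unfold NoChain at h2
  rw [tb, if_neg h0, if_neg h, if_neg h2]

lemma tb_cases (G : Multiset Comp) : tb G = 0 ∨ tb G = 4 ∨ tb G = 6 ∨ tb G = 8 := by
  rcases eq_or_ne G 0 with rfl | h0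
  · exact Or.inl tb_zero
  by_cases h : HasLong G ∨ NoLoop G
  · exact Or.inr (Or.inl (tb_of_four h0 h))
  by_cases h2 : NoChain G
  · exact Or.inr (Or.inr (Or.inr (tb_of_eight h0 h h2)))
  · exact Or.inr (Or.inr (Or.inl (tb_of_six h0 h h2)))

lemma tb_even (G : Multiset Comp) : tb G % 2 = 0 := by
  rcases tb_cases G with h | h | h | h <;> rw [h] <;> rfl

lemma tb_pos {G : Multiset Comp} (h0 : G ≠ 0) : 4 ≤ tb G ∧ tb G ≤ 8 := by
  rcases tb_cases G with h | h | h | h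
  · exfalso
    by_cases h1 : HasLong G ∨ NoLoop G
    · rw [tb_of_four h0 h1] at h; omega
    · by_cases h2 : NoChain G
      · rw [tb_of_eight h0 h1 h2] at h; omega
      · rw [tb_of_six h0 h1 h2] at h; omega
  all_goals omega

lemma SL_of_erase {G : Multiset Comp} (hSL : IsSimpleLoony G) (p : Comp) :
    IsSimpleLoony (G.erase p) := fun q hq => hSL q (Multiset.mem_of_mem_erase hq)

lemma SL_of_cons {p : Comp} {G : Multiset Comp} (hSL : IsSimpleLoony (p ::ₘ G)) :
    IsSimpleLoony G := fun q hq => hSL q (Multiset.mem_cons_of_mem hq)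

/-- membership transfer: erasing one element keeps all others -/
lemma mem_erase_of_mem_of_ne {G : Multiset Comp} {p q : Comp} (hq : q ∈ G) (h : q ≠ p) :
    q ∈ G.erase p := Multiset.mem_erase_of_ne h |>.mpr hq

lemma hasLong_erase_chain3 {G : Multiset Comp} :
    HasLong (G.erase (Comp.chain 3)) ↔ HasLong G := by
  constructor
  · rintro ⟨c, hc, hm⟩; exact ⟨c, hc, Multiset.mem_of_mem_erase hm⟩
  · rintro ⟨c, hc, hm⟩
    refine ⟨c, hc, mem_erase_of_mem_of_ne hm ?_⟩
    intro h; rw [Comp.chain.injEq] at h; omega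

lemma noLoop_erase_chain {G : Multiset Comp} (c : ℤ) :
    NoLoop (G.erase (Comp.chain c)) ↔ NoLoop G := by
  constructor
  · intro h l hl
    exact h l (mem_erase_of_mem_of_ne hl (by simp))
  · intro h l hl; exact h l (Multiset.mem_of_mem_erase hl)

lemma noChain_erase_loop {G : Multiset Comp} (l : ℤ) :
    NoChain (G.erase (Comp.loop l)) ↔ NoChain G := by
  constructor
  · intro h c hc
    exact h c (mem_erase_of_mem_of_ne hc (by simp))
  · intro h c hc; exact h c (Multiset.mem_of_mem_erase hc)

lemma hasLong_erase_loop {G : Multiset Comp} (l : ℤ) :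
    HasLong (G.erase (Comp.loop l)) ↔ HasLong G := by
  constructor
  · rintro ⟨c, hc, hm⟩; exact ⟨c, hc, Multiset.mem_of_mem_erase hm⟩
  · rintro ⟨c, hc, hm⟩
    exact ⟨c, hc, mem_erase_of_mem_of_ne hm (by simp)⟩

/-- `tb` is unchanged when erasing a 3-chain, provided another chain remains. -/
lemma tb_erase_chain3 {G : Multiset Comp} (hp : Comp.chain 3 ∈ G)
    (hc : ¬ NoChain (G.erase (Comp.chain 3))) :
    tb (G.erase (Comp.chain 3)) = tb G := by
  have h0 : G ≠ 0 := fun h => by simp [h] at hp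
  have h0' : G.erase (Comp.chain 3) ≠ 0 := by
    intro h
    obtain ⟨c, hcm⟩ := not_forall.mp hc
    rw [h] at hcm; simp at hcm
  by_cases h : HasLong G ∨ NoLoop G
  · rw [tb_of_four h0 h, tb_of_four h0']
    rcases h with h | h
    · exact Or.inl (hasLong_erase_chain3.mpr h)
    · exact Or.inr ((noLoop_erase_chain 3).mpr h)
  · have h' : ¬(HasLong (G.erase (Comp.chain 3)) ∨ NoLoop (G.erase (Comp.chain 3))) := by
      rw [hasLong_erase_chain3, noLoop_erase_chain]; exact h
    have h2 : ¬ NoChain G := fun hnc => hnc 3 hp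
    rw [tb_of_six h0' h' hc, tb_of_six h0 h h2]

lemma cv_zero : cv 0 = 0 := by simp [cv, fcv_zero, tb_zero]

lemma cv_erase_chain3 {G : Multiset Comp} (hp : Comp.chain 3 ∈ G)
    (hc : ¬ NoChain (G.erase (Comp.chain 3))) :
    cv (G.erase (Comp.chain 3)) = cv G + 1 := by
  rw [cv, cv, fcv_erase hp, tb_erase_chain3 hp hc]; simp [wt]; ring
lemma v_chain3 : v {Comp.chain 3} = 3 := by
  rw [v_singleton]; simp [cand]

lemma ne_zero_of_mem {G : Multiset Comp} {p : Comp} (hp : p ∈ G) : G ≠ 0 :=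
  fun h => by simp [h] at hp

lemma fcv_all_chain3 {G : Multiset Comp} (h : ∀ p ∈ G, p = Comp.chain 3) :
    fcv G = -(Multiset.card G) := by
  induction G using Multiset.induction with
  | empty => simp [fcv_zero]
  | cons a s ih =>
    rw [fcv_cons, ih (fun p hp => h p (Multiset.mem_cons_of_mem hp))]
    have := h a (Multiset.mem_cons_self a s)
    subst this
    simp only [wt, Multiset.card_cons]
    push_cast
    ring

lemma fcv_nonneg_of {G : Multiset Comp} (h : ∀ p ∈ G, 0 ≤ wt p) : 0 ≤ fcv G := by
  induction G using Multiset.induction with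
  | empty => simp [fcv_zero]
  | cons a s ih =>
    rw [fcv_cons]
    have h1 := h a (Multiset.mem_cons_self a s)
    have h2 := ih (fun p hp => h p (Multiset.mem_cons_of_mem hp))
    omega

lemma fcv_loops_even {G : Multiset Comp} (hSL : IsSimpleLoony G)
    (h : ∀ p ∈ G, ∃ l, p = Comp.loop l) : fcv G % 2 = 0 := by
  induction G using Multiset.induction with
  | empty => simp [fcv_zero]
  | cons a s ih =>
    rw [fcv_cons]
    obtain ⟨l, rfl⟩ := h a (Multiset.mem_cons_self a s)
    have hev : Even l := (hSL _ (Multiset.mem_cons_self _ s)).2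
    rw [Int.even_iff] at hev
    have h2 := ih (SL_of_cons hSL) (fun p hp => h p (Multiset.mem_cons_of_mem hp))
    simp only [wt]
    omega

/-- Claims proven by simultaneous strong induction. -/
def Claims (G : Multiset Comp) : Prop :=
  (cv G ≤ v G) ∧
  ((v G - cv G) % 2 = 0) ∧
  (∀ L, (∀ p ∈ L, ∃ l, p = Comp.loop l) → G = Comp.chain 3 ::ₘ L → v G ≤ max 3 (cv G)) ∧
  (∀ c L, 4 ≤ c → (∀ p ∈ L, ∃ l, p = Comp.loop l ∧ 8 ≤ l) → G = Comp.chain c ::ₘ L →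
    v G ≤ cv G) ∧
  (Comp.chain 3 ∈ G → v G ≤ max 3 (cv G)) ∧
  (v G ≤ max 4 (cv G)) ∧
  (2 ≤ G.count (Comp.chain 3) → cv G < 2 →
    (cv G % 2 ≠ 0 → v G = 1) ∧
    (cv G % 2 = 0 →
      ((Comp.loop 4 ∈ G ∧ cv (G.erase (Comp.loop 4)) = 4) → v G = 0) ∧
      (¬(Comp.loop 4 ∈ G ∧ cv (G.erase (Comp.loop 4)) = 4) → v G = 2)))

lemma claims_zero : Claims 0 := by
  refine ⟨?_, ?_, ?_, ?_, ?_, ?_, ?_⟩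
  · rw [cv_zero, v_zero]
  · rw [cv_zero, v_zero]; norm_num
  · intro L _ h; exact absurd h.symm (Multiset.cons_ne_zero)
  · intro c L _ _ h; exact absurd h.symm (Multiset.cons_ne_zero)
  · intro h; exact absurd h (Multiset.notMem_zero _)
  · rw [cv_zero, v_zero]; omega
  · intro h; simp at h
section Step
variable {G : Multiset Comp}

lemma card_erase_lt {p : Comp} (hp : p ∈ G) :
    Multiset.card (G.erase p) < Multiset.card G := by
  rw [Multiset.card_erase_of_mem hp]
  have : 0 < Multiset.card G := Multiset.card_pos.mpr (ne_zero_of_mem hp)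
  exact Nat.pred_lt_of_lt this

lemma step_C1 (hSL : IsSimpleLoony G) (hG0 : G ≠ 0)
    (IH : ∀ H : Multiset Comp, Multiset.card H < Multiset.card G → IsSimpleLoony H → Claims H) :
    cv G ≤ v G := by
  apply v_ge hSL hG0
  intro p hp
  have hSL' := SL_of_erase hSL p
  have hfcv := fcv_erase hp
  cases p with
  | chain c =>
    simp only [wt] at hfcv
    have hc3 : (3:ℤ) ≤ c := hSL _ hp
    by_cases h0' : G.erase (Comp.chain c) = 0
    · -- G = {chain c}
      have hG : G = {Comp.chain c} := by
        rw [← Multiset.cons_erase hp, h0']; rfl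
      subst hG
      rw [h0', v_zero]
      have h1 : fcv ({Comp.chain c} : Multiset Comp) = c - 4 := by simp [fcv]
      have h2 : tb ({Comp.chain c} : Multiset Comp) = 4 := by
        apply tb_of_four (by simp)
        exact Or.inr (fun l hl => by simp at hl)
      simp only [cand, cv, h1, h2]
      norm_num
    · have IH' := IH _ (card_erase_lt hp) hSL'
      have h1 : cv (G.erase (Comp.chain c)) ≤ v (G.erase (Comp.chain c)) := IH'.1
      have htb : tb G ≤ tb (G.erase (Comp.chain c)) := by
        by_cases hL : HasLong G ∨ NoLoop G
        · rw [tb_of_four hG0 hL]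
          exact (tb_pos h0').1
        · have h2 : ¬ NoChain G := fun hnc => hnc c hp
          rw [tb_of_six hG0 hL h2]
          have hL' : ¬(HasLong (G.erase (Comp.chain c)) ∨ NoLoop (G.erase (Comp.chain c))) := by
            rintro (⟨d, hd, hdm⟩ | hnl)
            · exact hL (Or.inl ⟨d, hd, Multiset.mem_of_mem_erase hdm⟩)
            · refine hL (Or.inr (fun l hl => ?_))
              exact hnl l (mem_erase_of_mem_of_ne hl (by simp))
          by_cases hNC : NoChain (G.erase (Comp.chain c))
          · rw [tb_of_eight h0' hL' hNC]; omega
          · rw [tb_of_six h0' hL' hNC]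
      simp only [cand]
      have hcv' : cv (G.erase (Comp.chain c)) = fcv G - (c - 4) + tb (G.erase (Comp.chain c)) := by
        rw [cv, hfcv]
      have hcvG : cv G = fcv G + tb G := rfl
      rcases abs_cases (v (G.erase (Comp.chain c)) - 2) with ⟨he, _⟩ | ⟨he, _⟩ <;> omega
  | loop l =>
    simp only [wt] at hfcv
    obtain ⟨hl4, hlev⟩ : (4:ℤ) ≤ l ∧ Even l := hSL _ hp
    by_cases h0' : G.erase (Comp.loop l) = 0
    · have hG : G = {Comp.loop l} := by
        rw [← Multiset.cons_erase hp, h0']; rfl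
      subst hG
      rw [h0', v_zero]
      have h1 : fcv ({Comp.loop l} : Multiset Comp) = l - 8 := by simp [fcv]
      have h2 : tb ({Comp.loop l} : Multiset Comp) = 8 := by
        apply tb_of_eight (by simp)
        · rintro (⟨d, hd, hdm⟩ | hnl)
          · simp at hdm
          · exact hnl l (by simp)
        · intro d hd; simp at hd
      simp only [cand, cv, h1, h2]
      norm_num
    · have IH' := IH _ (card_erase_lt hp) hSL'
      have h1 : cv (G.erase (Comp.loop l)) ≤ v (G.erase (Comp.loop l)) := IH'.1
      have hcv' : cv (G.erase (Comp.loop l)) = fcv G - (l - 8) + tb (G.erase (Comp.loop l)) := by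
        rw [cv, hfcv]
      have hcvG : cv G = fcv G + tb G := rfl
      have hnlG : ¬ NoLoop G := fun h => h l hp
      by_cases hNL : NoLoop (G.erase (Comp.loop l))
      · -- the loop was the last loop
        by_cases hHL : HasLong G
        · -- tb G = 4 = tb G'
          have htbG : tb G = 4 := tb_of_four hG0 (Or.inl hHL)
          have htbG' : tb (G.erase (Comp.loop l)) = 4 := tb_of_four h0' (Or.inr hNL)
          simp only [cand]
          rcases abs_cases (v (G.erase (Comp.loop l)) - 4) with ⟨he, _⟩ | ⟨he, _⟩ <;> omega
        · -- tb G = 6; G' consists only of 3-chains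
          have hNCG : ¬ NoChain G := by
            intro hnc
            obtain ⟨q, hq⟩ := Multiset.exists_mem_of_ne_zero h0'
            cases q with
            | chain c => exact hnc c (Multiset.mem_of_mem_erase hq)
            | loop m => exact hNL m hq
          have htbG : tb G = 6 := tb_of_six hG0 (by tauto) hNCG
          have hall3 : ∀ q ∈ G.erase (Comp.loop l), q = Comp.chain 3 := by
            intro q hq
            cases q with
            | chain c =>
              have hc3 : (3:ℤ) ≤ c := hSL _ (Multiset.mem_of_mem_erase hq)
              have : ¬ (4 ≤ c) := fun h4 => hHL ⟨c, h4, Multiset.mem_of_mem_erase hq⟩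
              have : c = 3 := by omega
              rw [this]
            | loop m => exact absurd hq (hNL m)
          have hfcv' : fcv (G.erase (Comp.loop l)) = -(Multiset.card (G.erase (Comp.loop l))) :=
            fcv_all_chain3 hall3
          have hcard1 : 1 ≤ Multiset.card (G.erase (Comp.loop l)) := by
            rw [Nat.one_le_iff_ne_zero]; simpa using h0'
          by_cases hcard2 : 2 ≤ Multiset.card (G.erase (Comp.loop l))
          · -- candidate ≥ l - 4 ≥ cv
            simp only [cand]
            have habs := abs_nonneg (v (G.erase (Comp.loop l)) - 4)
            have : (2:ℤ) ≤ Multiset.card (G.erase (Comp.loop l)) := by exact_mod_cast hcard2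
            omega
          · -- exactly one 3-chain left
            have hcard : Multiset.card (G.erase (Comp.loop l)) = 1 := by omega
            obtain ⟨a, ha⟩ := Multiset.card_eq_one.mp hcard
            have ha3 : a = Comp.chain 3 := hall3 a (by rw [ha]; exact Multiset.mem_singleton_self a)
            have hGe : G.erase (Comp.loop l) = {Comp.chain 3} := by rw [ha, ha3]
            have hv' : v (G.erase (Comp.loop l)) = 3 := by rw [hGe]; exact v_chain3
            simp only [cand, hv']
            have hfcv1 : fcv (G.erase (Comp.loop l)) = -1 := by rw [hGe]; simp [fcv, wt]
            have : |(3:ℤ) - 4| = 1 := by norm_num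
            omega
      · -- loops remain: tb G' = tb G
        have htb : tb (G.erase (Comp.loop l)) = tb G := by
          by_cases hNC : NoChain G
          · have hNC' : NoChain (G.erase (Comp.loop l)) := (noChain_erase_loop l).mpr hNC
            have hL : ¬(HasLong G ∨ NoLoop G) := by
              rintro (⟨d, hd, hdm⟩ | hnl)
              · exact hNC d hdm
              · exact hnl l hp
            have hL' : ¬(HasLong (G.erase (Comp.loop l)) ∨ NoLoop (G.erase (Comp.loop l))) := by
              rintro (hlong | hnl)
              · exact hL (Or.inl ((hasLong_erase_loop l).mp hlong))
              · exact hNL hnl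
            rw [tb_of_eight h0' hL' hNC', tb_of_eight hG0 hL hNC]
          · by_cases hHL : HasLong G
            · rw [tb_of_four h0' (Or.inl ((hasLong_erase_loop l).mpr hHL)),
                tb_of_four hG0 (Or.inl hHL)]
            · have hL : ¬(HasLong G ∨ NoLoop G) := by tauto
              have hL' : ¬(HasLong (G.erase (Comp.loop l)) ∨ NoLoop (G.erase (Comp.loop l))) := by
                rintro (hlong | hnl)
                · exact hHL ((hasLong_erase_loop l).mp hlong)
                · exact hNL hnl
              have hNC' : ¬ NoChain (G.erase (Comp.loop l)) := by
                rw [noChain_erase_loop l]; exact hNC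
              rw [tb_of_six h0' hL' hNC', tb_of_six hG0 hL hNC]
        simp only [cand]
        rcases abs_cases (v (G.erase (Comp.loop l)) - 4) with ⟨he, _⟩ | ⟨he, _⟩ <;> omega

end Step
section Step2
variable {G : Multiset Comp}

lemma step_C2 (hSL : IsSimpleLoony G) (hG0 : G ≠ 0)
    (IH : ∀ H : Multiset Comp, Multiset.card H < Multiset.card G → IsSimpleLoony H → Claims H) :
    (v G - cv G) % 2 = 0 := by
  obtain ⟨p, hp, hv⟩ := (v_spec hSL hG0).1
  have hSL' := SL_of_erase hSL p
  have hpar : (v (G.erase p) - cv (G.erase p)) % 2 = 0 := by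
    rcases eq_or_ne (G.erase p) 0 with h0' | h0'
    · rw [h0', v_zero, cv_zero]; norm_num
    · exact (IH _ (card_erase_lt hp) hSL').2.1
  have htbe := tb_even G
  have htbe' := tb_even (G.erase p)
  have hfcv := fcv_erase hp
  have hcvG : cv G = fcv G + tb G := rfl
  have hcv' : cv (G.erase p) = fcv (G.erase p) + tb (G.erase p) := rfl
  cases p with
  | chain c =>
    simp only [wt] at hfcv
    simp only [cand] at hv
    rcases abs_cases (v (G.erase (Comp.chain c)) - 2) with ⟨he, _⟩ | ⟨he, _⟩ <;> omega
  | loop l =>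
    simp only [wt] at hfcv
    simp only [cand] at hv
    rcases abs_cases (v (G.erase (Comp.loop l)) - 4) with ⟨he, _⟩ | ⟨he, _⟩ <;> omega

end Step2
lemma le_max_elim {a b c : ℤ} (h : a ≤ max b c) : a ≤ b ∨ a ≤ c := by
  rcases max_cases b c with ⟨h1, _⟩ | ⟨h1, _⟩ <;> omega

lemma loop_ne_chain (l c : ℤ) : Comp.loop l ≠ Comp.chain c := fun h => Comp.noConfusion h
lemma chain_ne_loop (c l : ℤ) : Comp.chain c ≠ Comp.loop l := fun h => Comp.noConfusion h

lemma tb_c3_loops {L : Multiset Comp} (hL : ∀ p ∈ L, ∃ l, p = Comp.loop l) (hL0 : L ≠ 0) :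
    tb (Comp.chain 3 ::ₘ L) = 6 := by
  apply tb_of_six (Multiset.cons_ne_zero)
  · rintro (⟨c, hc, hm⟩ | hnl)
    · rcases Multiset.mem_cons.mp hm with h | h
      · rw [Comp.chain.injEq] at h; omega
      · obtain ⟨l, hl⟩ := hL _ h; exact Comp.noConfusion hl
    · obtain ⟨q, hq⟩ := Multiset.exists_mem_of_ne_zero hL0
      obtain ⟨l, rfl⟩ := hL _ hq
      exact hnl l (Multiset.mem_cons_of_mem hq)
  · intro hnc; exact hnc 3 (Multiset.mem_cons_self _ _)

lemma tb_loops {L : Multiset Comp} (hL : ∀ p ∈ L, ∃ l, p = Comp.loop l) (hL0 : L ≠ 0) :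
    tb L = 8 := by
  apply tb_of_eight hL0
  · rintro (⟨c, hc, hm⟩ | hnl)
    · obtain ⟨l, hl⟩ := hL _ hm; exact Comp.noConfusion hl
    · obtain ⟨q, hq⟩ := Multiset.exists_mem_of_ne_zero hL0
      obtain ⟨l, rfl⟩ := hL _ hq
      exact hnl l hq
  · intro c hc
    obtain ⟨l, hl⟩ := hL _ hc; exact Comp.noConfusion hl

lemma cv_c3_loops {L : Multiset Comp} (hL : ∀ p ∈ L, ∃ l, p = Comp.loop l) (hL0 : L ≠ 0) :
    cv (Comp.chain 3 ::ₘ L) = 5 + fcv L := by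
  rw [cv, fcv_cons, tb_c3_loops hL hL0]; simp [wt]; ring

lemma loops_erase {L : Multiset Comp} (hL : ∀ p ∈ L, ∃ l, p = Comp.loop l) (q : Comp) :
    ∀ p ∈ L.erase q, ∃ l, p = Comp.loop l :=
  fun p hp => hL p (Multiset.mem_of_mem_erase hp)

/-- C6 family: a single 3-chain together with loops. -/
lemma step_C6 {G : Multiset Comp} (hSL : IsSimpleLoony G)
    (IH : ∀ H : Multiset Comp, Multiset.card H < Multiset.card G → IsSimpleLoony H → Claims H)
    (L : Multiset Comp) (hL : ∀ p ∈ L, ∃ l, p = Comp.loop l) (hGL : G = Comp.chain 3 ::ₘ L) :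
    v G ≤ max 3 (cv G) := by
  subst hGL
  set G := Comp.chain 3 ::ₘ L with hG
  have hc3mem : Comp.chain 3 ∈ G := Multiset.mem_cons_self _ _
  have hG0 : G ≠ 0 := Multiset.cons_ne_zero
  have hSLL : IsSimpleLoony L := SL_of_cons hSL
  rcases eq_or_ne L 0 with rfl | hL0
  · -- G = {chain 3}
    have : v G = 3 := v_chain3
    rw [this]; exact le_max_of_le_left (le_refl 3)
  have htbG : tb G = 6 := tb_c3_loops hL hL0
  have hcvG : cv G = 5 + fcv L := cv_c3_loops hL hL0
  have hfcvL : fcv L % 2 = 0 := fcv_loops_even hSLL hL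
  have hcvodd : cv G % 2 = 1 := by omega
  -- loop lengths ≥ 6 unless loop 4 present
  by_cases h4 : Comp.loop 4 ∈ L
  · -- Subcase A : open the 4-loop
    have h4G : Comp.loop 4 ∈ G := Multiset.mem_cons_of_mem h4
    have hHe : G.erase (Comp.loop 4) = Comp.chain 3 ::ₘ L.erase (Comp.loop 4) :=
      Multiset.erase_cons_tail L (chain_ne_loop 3 4)
    have hcand := v_le_of_mem hSL h4G
    simp only [cand, hHe] at hcand
    set H := Comp.chain 3 ::ₘ L.erase (Comp.loop 4) with hH
    have hSLH : IsSimpleLoony H := by rw [← hHe]; exact SL_of_erase hSL _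
    have hcardH : Multiset.card H < Multiset.card G := by
      rw [← hHe]; exact card_erase_lt h4G
    rcases eq_or_ne (L.erase (Comp.loop 4)) 0 with hL4 | hL4
    · -- H = {chain 3}
      have : v H = 3 := by rw [hH, hL4, Multiset.cons_zero]; exact v_chain3
      rw [this] at hcand
      have : |(3:ℤ) - 4| = 1 := by norm_num
      refine le_max_of_le_left ?_; omega
    · have IHH := IH H hcardH hSLH
      have hvH0 : 0 ≤ v H := v_nonneg hSLH
      have hvH3 : v H ≤ 3 ∨ v H ≤ cv H :=
        le_max_elim (IHH.2.2.1 (L.erase (Comp.loop 4)) (loops_erase hL _) hH)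
      have hparH : (v H - cv H) % 2 = 0 := IHH.2.1
      have hcvH : cv H = cv G + 4 := by
        rw [hH, cv_c3_loops (loops_erase hL _) hL4, fcv_erase h4, hcvG]
        simp only [wt]; ring
      by_cases hcv5 : 5 ≤ cv G
      · refine le_max_of_le_right ?_
        rcases abs_cases (v H - 4) with ⟨he, _⟩ | ⟨he, _⟩ <;> omega
      · refine le_max_of_le_left ?_
        rcases abs_cases (v H - 4) with ⟨he, _⟩ | ⟨he, _⟩ <;> omega
  · -- Subcase B : no 4-loop; all loops ≥ 6
    have hge6 : ∀ p ∈ L, ∃ l, p = Comp.loop l ∧ 6 ≤ l := by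
      intro p hp
      obtain ⟨l, rfl⟩ := hL p hp
      obtain ⟨hl4, hlev⟩ := hSLL _ hp
      refine ⟨l, rfl, ?_⟩
      rcases eq_or_ne l 4 with rfl | hne
      · exact absurd hp h4
      · rw [Int.even_iff] at hlev; omega
    have hLe : G.erase (Comp.chain 3) = L := Multiset.erase_cons_head _ _
    by_cases hvL : v L ≤ 4
    · -- open the 3-chain
      have hcand := v_le_of_mem hSL hc3mem
      simp only [cand, hLe] at hcand
      have hvL0 : 0 ≤ v L := v_nonneg hSLL
      refine le_max_of_le_left ?_
      rcases abs_cases (v L - 2) with ⟨he, _⟩ | ⟨he, _⟩ <;> omega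
    · push_neg at hvL
      have IHL := IH L (by simp [hG]) hSLL
      have htbL : tb L = 8 := tb_loops hL hL0
      have hcvL : cv L = fcv L + 8 := by rw [cv, htbL]
      have hvLmax : v L ≤ 4 ∨ v L ≤ cv L := le_max_elim (by simpa [max_comm] using IHL.2.2.2.2.2.1)
      have hcvL5 : 5 ≤ cv L := by omega
      have hcvG3 : 3 ≤ cv G := by omega
      rw [max_eq_right (by omega : (3:ℤ) ≤ cv G)]
      by_cases h6 : Comp.loop 6 ∈ L
      · -- open the 6-loop
        have h6G : Comp.loop 6 ∈ G := Multiset.mem_cons_of_mem h6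
        have hHe : G.erase (Comp.loop 6) = Comp.chain 3 ::ₘ L.erase (Comp.loop 6) :=
          Multiset.erase_cons_tail L (chain_ne_loop 3 6)
        have hcand := v_le_of_mem hSL h6G
        simp only [cand, hHe] at hcand
        set H := Comp.chain 3 ::ₘ L.erase (Comp.loop 6) with hH
        have hSLH : IsSimpleLoony H := by rw [← hHe]; exact SL_of_erase hSL _
        rcases eq_or_ne (L.erase (Comp.loop 6)) 0 with hL6 | hL6
        · -- L = {loop 6}, cv G = 3
          have hvH : v H = 3 := by rw [hH, hL6, Multiset.cons_zero]; exact v_chain3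
          rw [hvH] at hcand
          have hLsing : L = {Comp.loop 6} := by
            rw [← Multiset.cons_erase h6, hL6]; rfl
          have : fcv L = -2 := by rw [hLsing]; simp [fcv]
          have : |(3:ℤ) - 4| = 1 := by norm_num
          omega
        · have IHH := IH H (by rw [← hHe]; exact card_erase_lt h6G) hSLH
          have hvH0 : 0 ≤ v H := v_nonneg hSLH
          have hvH3 : v H ≤ 3 ∨ v H ≤ cv H :=
            le_max_elim (IHH.2.2.1 (L.erase (Comp.loop 6)) (loops_erase hL _) hH)
          have hparH : (v H - cv H) % 2 = 0 := IHH.2.1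
          have hcvH : cv H = cv G + 2 := by
            rw [hH, cv_c3_loops (loops_erase hL _) hL6, fcv_erase h6, hcvG]
            simp only [wt]; ring
          by_cases hcv5 : 5 ≤ cv G
          · rcases abs_cases (v H - 4) with ⟨he, _⟩ | ⟨he, _⟩ <;> omega
          · -- cv G = 3
            have hcvG3' : cv G = 3 := by omega
            have hvHne1 : v H ≠ 1 := by
              intro hvH1
              -- achievement on H
              have hH0 : H ≠ 0 := by rw [hH]; exact Multiset.cons_ne_zero
              obtain ⟨q, hq, hqv⟩ := (v_spec hSLH hH0).1
              rw [hvH1] at hqv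
              rcases Multiset.mem_cons.mp (by rw [← hH]; exact hq) with rfl | hqL
              · -- q = chain 3 : v (L.erase (loop 6)) = 2
                simp only [cand] at hqv
                have hLe' : H.erase (Comp.chain 3) = L.erase (Comp.loop 6) := by
                  rw [hH]; exact Multiset.erase_cons_head _ _
                rw [hLe'] at hqv
                have habs := abs_nonneg (v (L.erase (Comp.loop 6)) - 2)
                have hv2 : v (L.erase (Comp.loop 6)) = 2 := by
                  rcases abs_cases (v (L.erase (Comp.loop 6)) - 2) with ⟨he, _⟩ | ⟨he, _⟩ <;> omega
                -- then v L ≤ 2 + |2 - 4| = 4, contradiction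
                have hcand6 := v_le_of_mem hSLL h6
                simp only [cand, hv2] at hcand6
                norm_num at hcand6
                omega
              · -- q is a loop of length ≥ 6 : candidate ≥ 2
                obtain ⟨m, rfl, hm6⟩ := hge6 _ (Multiset.mem_of_mem_erase hqL)
                simp only [cand] at hqv
                have habs := abs_nonneg (v (H.erase (Comp.loop m)) - 4)
                omega
            rcases abs_cases (v H - 4) with ⟨he, _⟩ | ⟨he, _⟩ <;> omega
      · -- all loops ≥ 8
        have hge8 : ∀ p ∈ L, ∃ l, p = Comp.loop l ∧ 8 ≤ l := by
          intro p hp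
          obtain ⟨l, rfl, hl6⟩ := hge6 p hp
          obtain ⟨_, hlev⟩ := hSLL _ hp
          refine ⟨l, rfl, ?_⟩
          rcases eq_or_ne l 6 with rfl | hne
          · exact absurd hp h6
          · rw [Int.even_iff] at hlev; omega
        obtain ⟨q, hq⟩ := Multiset.exists_mem_of_ne_zero hL0
        obtain ⟨l0, rfl, hl08⟩ := hge8 q hq
        have hqG : Comp.loop l0 ∈ G := Multiset.mem_cons_of_mem hq
        have hHe : G.erase (Comp.loop l0) = Comp.chain 3 ::ₘ L.erase (Comp.loop l0) :=
          Multiset.erase_cons_tail L (chain_ne_loop 3 l0)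
        have hcand := v_le_of_mem hSL hqG
        simp only [cand, hHe] at hcand
        set H := Comp.chain 3 ::ₘ L.erase (Comp.loop l0) with hH
        have hSLH : IsSimpleLoony H := by rw [← hHe]; exact SL_of_erase hSL _
        rcases eq_or_ne (L.erase (Comp.loop l0)) 0 with hLe0 | hLe0
        · -- L = {loop l0}
          have hvH : v H = 3 := by rw [hH, hLe0, Multiset.cons_zero]; exact v_chain3
          rw [hvH] at hcand
          have hLsing : L = {Comp.loop l0} := by
            rw [← Multiset.cons_erase hq, hLe0]; rfl
          have : fcv L = l0 - 8 := by rw [hLsing]; simp [fcv]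
          have : |(3:ℤ) - 4| = 1 := by norm_num
          omega
        · have IHH := IH H (by rw [← hHe]; exact card_erase_lt hqG) hSLH
          have hvH3 : v H ≤ 3 ∨ v H ≤ cv H :=
            le_max_elim (IHH.2.2.1 (L.erase (Comp.loop l0)) (loops_erase hL _) hH)
          have hvHcv : cv H ≤ v H := IHH.1
          have hcvH : cv H = cv G - (l0 - 8) := by
            rw [hH, cv_c3_loops (loops_erase hL _) hLe0, fcv_erase hq, hcvG]
            simp only [wt]; ring
          have hfcvrest : 0 ≤ fcv (L.erase (Comp.loop l0)) := by
            apply fcv_nonneg_of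
            intro p hp
            obtain ⟨m, rfl, hm8⟩ := hge8 p (Multiset.mem_of_mem_erase hp)
            simp [wt]; omega
          have hcvH5 : 5 ≤ cv H := by
            have : fcv L = (l0 - 8) + fcv (L.erase (Comp.loop l0)) := by
              rw [fcv_erase hq]; simp only [wt]; ring
            omega
          have hvHeq : v H = cv H := by omega
          rcases abs_cases (v H - 4) with ⟨he, _⟩ | ⟨he, _⟩ <;> omega
/-- C5: no 3-chain and no 4-loop means value at least 2. -/
lemma v_ge_two {G : Multiset Comp} (hSL : IsSimpleLoony G) (hG0 : G ≠ 0)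
    (h3 : Comp.chain 3 ∉ G) (h4 : Comp.loop 4 ∉ G) : 2 ≤ v G := by
  apply v_ge hSL hG0
  intro p hp
  cases p with
  | chain c =>
    have hc3 : (3:ℤ) ≤ c := hSL _ hp
    have hc : c ≠ 3 := fun h => h3 (h ▸ hp)
    have := abs_nonneg (v (G.erase (Comp.chain c)) - 2)
    simp only [cand]; omega
  | loop l =>
    obtain ⟨hl4, hlev⟩ : (4:ℤ) ≤ l ∧ Even l := hSL _ hp
    have hl : l ≠ 4 := fun h => h4 (h ▸ hp)
    rw [Int.even_iff] at hlev
    have := abs_nonneg (v (G.erase (Comp.loop l)) - 4)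
    simp only [cand]; omega

/-- L8: if there is a 3-chain then v ≤ max 3 cv. -/
lemma step_L8 {G : Multiset Comp} (hSL : IsSimpleLoony G)
    (IH : ∀ H : Multiset Comp, Multiset.card H < Multiset.card G → IsSimpleLoony H → Claims H)
    (h3 : Comp.chain 3 ∈ G) : v G ≤ max 3 (cv G) := by
  by_cases hloops : ∀ p ∈ G.erase (Comp.chain 3), ∃ l, p = Comp.loop l
  · exact step_C6 hSL IH _ hloops (Multiset.cons_erase h3).symm
  · push_neg at hloops
    obtain ⟨q, hq, hqnl⟩ := hloops
    have hNC : ¬ NoChain (G.erase (Comp.chain 3)) := by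
      intro hnc
      cases q with
      | chain d => exact hnc d hq
      | loop m => exact hqnl m rfl
    have hcv' : cv (G.erase (Comp.chain 3)) = cv G + 1 := cv_erase_chain3 h3 hNC
    have hcand := v_le_of_mem hSL h3
    simp only [cand] at hcand
    have hSL' := SL_of_erase hSL (Comp.chain 3)
    have IH' := IH _ (card_erase_lt h3) hSL'
    have hv0 : 0 ≤ v (G.erase (Comp.chain 3)) := v_nonneg hSL'
    have hvle : v (G.erase (Comp.chain 3)) ≤ 4 ∨ v (G.erase (Comp.chain 3)) ≤ cv G + 1 := by
      have := le_max_elim IH'.2.2.2.2.2.1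
      omega
    rcases le_or_gt (cv G) 3 with hcv | hcv
    · refine le_max_of_le_left ?_
      rcases abs_cases (v (G.erase (Comp.chain 3)) - 2) with ⟨he, _⟩ | ⟨he, _⟩ <;> omega
    · refine le_max_of_le_right ?_
      rcases abs_cases (v (G.erase (Comp.chain 3)) - 2) with ⟨he, _⟩ | ⟨he, _⟩ <;> omega

/-- C7 family: one long chain plus loops of length ≥ 8. -/
lemma step_C7 {G : Multiset Comp} (hSL : IsSimpleLoony G)
    (IH : ∀ H : Multiset Comp, Multiset.card H < Multiset.card G → IsSimpleLoony H → Claims H)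
    (c : ℤ) (L : Multiset Comp) (hc4 : 4 ≤ c)
    (hL : ∀ p ∈ L, ∃ l, p = Comp.loop l ∧ 8 ≤ l) (hGL : G = Comp.chain c ::ₘ L) :
    v G ≤ cv G := by
  subst hGL
  set G := Comp.chain c ::ₘ L with hG
  have htbG : tb G = 4 :=
    tb_of_four Multiset.cons_ne_zero (Or.inl ⟨c, hc4, Multiset.mem_cons_self _ _⟩)
  have hcvG : cv G = c + fcv L := by rw [cv, fcv_cons, htbG]; simp only [wt]; ring
  rcases eq_or_ne L 0 with rfl | hL0
  · have : v G = c - 2 + |0 - 2| := v_singleton _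
    rw [this, hcvG]
    simp [fcv_zero]
  · obtain ⟨q, hq⟩ := Multiset.exists_mem_of_ne_zero hL0
    obtain ⟨l0, rfl, hl08⟩ := hL q hq
    have hqG : Comp.loop l0 ∈ G := Multiset.mem_cons_of_mem hq
    have hHe : G.erase (Comp.loop l0) = Comp.chain c ::ₘ L.erase (Comp.loop l0) :=
      Multiset.erase_cons_tail L (chain_ne_loop c l0)
    have hcand := v_le_of_mem hSL hqG
    simp only [cand, hHe] at hcand
    set H := Comp.chain c ::ₘ L.erase (Comp.loop l0) with hH
    have hSLH : IsSimpleLoony H := by rw [← hHe]; exact SL_of_erase hSL _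
    have IHH := IH H (by rw [← hHe]; exact card_erase_lt hqG) hSLH
    have hvH1 : cv H ≤ v H := IHH.1
    have hvH2 : v H ≤ cv H :=
      IHH.2.2.2.1 c (L.erase (Comp.loop l0)) hc4
        (fun p hp => hL p (Multiset.mem_of_mem_erase hp)) hH
    have htbH : tb H = 4 :=
      tb_of_four Multiset.cons_ne_zero (Or.inl ⟨c, hc4, Multiset.mem_cons_self _ _⟩)
    have hcvH : cv H = c + fcv (L.erase (Comp.loop l0)) := by
      rw [cv, hH, fcv_cons, htbH]; simp only [wt]; ring
    have hfcvrest : 0 ≤ fcv (L.erase (Comp.loop l0)) := by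
      apply fcv_nonneg_of
      intro p hp
      obtain ⟨m, rfl, hm8⟩ := hL p (Multiset.mem_of_mem_erase hp)
      simp [wt]; omega
    have hfcvL : fcv L = (l0 - 8) + fcv (L.erase (Comp.loop l0)) := by
      rw [fcv_erase hq]; simp only [wt]; ring
    rcases abs_cases (v H - 4) with ⟨he, _⟩ | ⟨he, _⟩ <;> omega

/-- C3: v ≤ max 4 cv. -/
lemma step_C3 {G : Multiset Comp} (hSL : IsSimpleLoony G) (hG0 : G ≠ 0)
    (IH : ∀ H : Multiset Comp, Multiset.card H < Multiset.card G → IsSimpleLoony H → Claims H) :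
    v G ≤ max 4 (cv G) := by
  by_cases h3 : Comp.chain 3 ∈ G
  · have := step_L8 hSL IH h3
    rcases le_max_elim this with h | h
    · exact le_max_of_le_left (by omega)
    · exact le_max_of_le_right h
  by_cases h4 : Comp.loop 4 ∈ G
  · -- open the 4-loop
    have hcand := v_le_of_mem hSL h4
    simp only [cand] at hcand
    set H := G.erase (Comp.loop 4) with hH
    rcases eq_or_ne H 0 with hH0 | hH0
    · rw [hH0, v_zero] at hcand
      refine le_max_of_le_left ?_
      have : |(0:ℤ) - 4| = 4 := by norm_num
      omega
    · have hSLH : IsSimpleLoony H := SL_of_erase hSL _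
      have IHH := IH H (card_erase_lt h4) hSLH
      have hvH0 : 0 ≤ v H := v_nonneg hSLH
      have hvHle := le_max_elim IHH.2.2.2.2.2.1
      have htbH : tb H ≤ tb G := by
        by_cases hHL : HasLong G
        · rw [tb_of_four hG0 (Or.inl hHL),
            tb_of_four hH0 (Or.inl ((hasLong_erase_loop 4).mpr hHL))]
        · by_cases hNC : NoChain G
          · have h8 : tb G = 8 := by
              apply tb_of_eight hG0
              · rintro (hl | hnl)
                · exact hHL hl
                · exact hnl 4 h4
              · exact hNC
            rw [h8]
            exact (tb_pos hH0).2
          · have h6 : tb G = 6 := by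
              apply tb_of_six hG0 _ hNC
              rintro (hl | hnl)
              · exact hHL hl
              · exact hnl 4 h4
            rw [h6]
            have hHL' : ¬ HasLong H := fun h => hHL ((hasLong_erase_loop 4).mp h)
            have hNC' : ¬ NoChain H := fun h => hNC ((noChain_erase_loop 4).mp h)
            by_cases hNLH : NoLoop H
            · rw [tb_of_four hH0 (Or.inr hNLH)]; omega
            · rw [tb_of_six hH0 (by tauto) hNC']
      have hcvH : cv H ≤ cv G + 4 := by
        have h1 : fcv H = fcv G + 4 := by rw [hH, fcv_erase h4]; simp only [wt]; ring
        have h2 : cv G = fcv G + tb G := rfl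
        have h3 : cv H = fcv H + tb H := rfl
        omega
      rcases le_or_gt (cv G) 4 with hcv | hcv
      · refine le_max_of_le_left ?_
        rcases abs_cases (v H - 4) with ⟨he, _⟩ | ⟨he, _⟩ <;> omega
      · refine le_max_of_le_right ?_
        rcases abs_cases (v H - 4) with ⟨he, _⟩ | ⟨he, _⟩ <;> omega
  by_cases h6 : Comp.loop 6 ∈ G
  · -- open the 6-loop
    have hcand := v_le_of_mem hSL h6
    simp only [cand] at hcand
    set H := G.erase (Comp.loop 6) with hH
    rcases eq_or_ne H 0 with hH0 | hH0
    · -- G = {loop 6}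
      have hG6 : G = {Comp.loop 6} := by
        have hce := Multiset.cons_erase h6
        rw [← hH, hH0, Multiset.cons_zero] at hce
        exact hce.symm
      rw [hH0, v_zero] at hcand
      have hcvG : cv G = 6 := by
        rw [hG6, cv]
        have h1 : fcv ({Comp.loop 6} : Multiset Comp) = -2 := by simp [fcv]
        have h2 : tb ({Comp.loop 6} : Multiset Comp) = 8 := by
          apply tb_of_eight (by simp)
          · rintro (⟨d, hd, hdm⟩ | hnl)
            · simp at hdm
            · exact hnl 6 (by simp)
          · intro d hd; simp at hd
        rw [h1, h2]
        norm_num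
      refine le_max_of_le_right ?_
      have : |(0:ℤ) - 4| = 4 := by norm_num
      omega
    · have hSLH : IsSimpleLoony H := SL_of_erase hSL _
      have IHH := IH H (card_erase_lt h6) hSLH
      have hvH2 : 2 ≤ v H := by
        apply v_ge_two hSLH hH0
        · intro hm; exact h3 (Multiset.mem_of_mem_erase hm)
        · intro hm; exact h4 (Multiset.mem_of_mem_erase hm)
      have hvHle := le_max_elim IHH.2.2.2.2.2.1
      have htbH : tb H = tb G := by
        by_cases hHL : HasLong G
        · rw [tb_of_four hG0 (Or.inl hHL),
            tb_of_four hH0 (Or.inl ((hasLong_erase_loop 6).mpr hHL))]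
        · by_cases hNC : NoChain G
          · have hNCH : NoChain H := (noChain_erase_loop 6).mpr hNC
            have hNLH : ¬ NoLoop H := by
              intro hnl
              obtain ⟨q, hq⟩ := Multiset.exists_mem_of_ne_zero hH0
              cases q with
              | chain d => exact hNCH d hq
              | loop m => exact hnl m hq
            have hnot : ¬(HasLong H ∨ NoLoop H) := by
              rintro (hl | hnl)
              exacts [hHL ((hasLong_erase_loop 6).mp hl), hNLH hnl]
            rw [tb_of_eight hG0 (by rintro (hl | hnl); exacts [hHL hl, hnl 6 h6]) hNC,
              tb_of_eight hH0 hnot hNCH]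
          · -- impossible: a chain exists, it is not long, hence a 3-chain, but chain 3 ∉ G
            exfalso
            apply hNC
            intro d hd
            have hd3 : (3:ℤ) ≤ d := hSL _ hd
            have : ¬ (4 ≤ d) := fun hh => hHL ⟨d, hh, hd⟩
            have : d = 3 := by omega
            exact h3 (this ▸ hd)
      have hcvH : cv H = cv G + 2 := by
        have h1 : fcv H = fcv G + 2 := by rw [hH, fcv_erase h6]; simp only [wt]; ring
        have h2 : cv G = fcv G + tb G := rfl
        have h3 : cv H = fcv H + tb H := rfl
        omega
      rcases le_or_gt (cv G) 4 with hcv | hcv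
      · refine le_max_of_le_left ?_
        rcases abs_cases (v H - 4) with ⟨he, _⟩ | ⟨he, _⟩ <;> omega
      · refine le_max_of_le_right ?_
        rcases abs_cases (v H - 4) with ⟨he, _⟩ | ⟨he, _⟩ <;> omega
  · -- all chains ≥ 4, all loops ≥ 8
    have hlong : ∀ d, Comp.chain d ∈ G → (4:ℤ) ≤ d := by
      intro d hd
      have hd3 : (3:ℤ) ≤ d := hSL _ hd
      rcases eq_or_ne d 3 with rfl | hne
      · exact absurd hd h3
      · omega
    have hloop8 : ∀ m, Comp.loop m ∈ G → (8:ℤ) ≤ m := by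
      intro m hm
      obtain ⟨hm4, hmev⟩ : (4:ℤ) ≤ m ∧ Even m := hSL _ hm
      rw [Int.even_iff] at hmev
      rcases eq_or_ne m 4 with rfl | hne4
      · exact absurd hm h4
      rcases eq_or_ne m 6 with rfl | hne6
      · exact absurd hm h6
      omega
    have hwt : ∀ p ∈ G, 0 ≤ wt p := by
      intro p hp
      cases p with
      | chain d => have := hlong d hp; simp only [wt]; omega
      | loop m => have := hloop8 m hp; simp only [wt]; omega
    by_cases hchain : ∃ d, Comp.chain d ∈ G
    · obtain ⟨c, hc⟩ := hchain
      have hc4 := hlong c hc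
      by_cases hc2 : ∃ d, Comp.chain d ∈ G.erase (Comp.chain c)
      · -- two chains: open chain c
        obtain ⟨d, hd⟩ := hc2
        have hd4 := hlong d (Multiset.mem_of_mem_erase hd)
        have hcand := v_le_of_mem hSL hc
        simp only [cand] at hcand
        set H := G.erase (Comp.chain c) with hH
        have hH0 : H ≠ 0 := ne_zero_of_mem hd
        have hSLH : IsSimpleLoony H := SL_of_erase hSL _
        have IHH := IH H (card_erase_lt hc) hSLH
        have hvH0 : 0 ≤ v H := v_nonneg hSLH
        have hvHle := le_max_elim IHH.2.2.2.2.2.1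
        have htbG : tb G = 4 := tb_of_four hG0 (Or.inl ⟨c, hc4, hc⟩)
        have htbH : tb H = 4 := tb_of_four hH0 (Or.inl ⟨d, hd4, hd⟩)
        have hfcvH : fcv H = fcv G - (c - 4) := by rw [hH, fcv_erase hc]; simp only [wt]
        have hfcvH0 : 0 ≤ fcv H := fcv_nonneg_of (fun p hp => hwt p (Multiset.mem_of_mem_erase hp))
        have h2 : cv G = fcv G + tb G := rfl
        have h3 : cv H = fcv H + tb H := rfl
        refine le_max_of_le_right ?_
        rcases abs_cases (v H - 2) with ⟨he, _⟩ | ⟨he, _⟩ <;> omega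
      · -- single chain: C7 family
        push_neg at hc2
        refine le_max_of_le_right (step_C7 hSL IH c (G.erase (Comp.chain c)) hc4 ?_
          (Multiset.cons_erase hc).symm)
        intro p hp
        cases p with
        | chain d => exact absurd hp (hc2 d)
        | loop m => exact ⟨m, rfl, hloop8 m (Multiset.mem_of_mem_erase hp)⟩
    · -- loops only, all ≥ 8
      push_neg at hchain
      obtain ⟨q, hq⟩ := Multiset.exists_mem_of_ne_zero hG0
      obtain ⟨l0, rfl⟩ : ∃ m, q = Comp.loop m := by
        cases q with
        | chain d => exact absurd hq (hchain d)
        | loop m => exact ⟨m, rfl⟩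
      have hl08 := hloop8 l0 hq
      have hcand := v_le_of_mem hSL hq
      simp only [cand] at hcand
      set H := G.erase (Comp.loop l0) with hH
      have htbG : tb G = 8 := by
        apply tb_of_eight hG0
        · rintro (⟨d, _, hdm⟩ | hnl)
          · exact hchain d hdm
          · exact hnl l0 hq
        · intro d hd; exact hchain d hd
      have hfcvH : fcv H = fcv G - (l0 - 8) := by rw [hH, fcv_erase hq]; simp only [wt]
      have hfcvH0 : 0 ≤ fcv H := fcv_nonneg_of (fun p hp => hwt p (Multiset.mem_of_mem_erase hp))
      have h2 : cv G = fcv G + tb G := rfl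
      rcases eq_or_ne H 0 with hH0 | hH0
      · rw [hH0, v_zero] at hcand
        refine le_max_of_le_right ?_
        have habs : |(0:ℤ) - 4| = 4 := by norm_num
        have : fcv H = 0 := by rw [hH0]; exact fcv_zero
        omega
      · have hSLH : IsSimpleLoony H := SL_of_erase hSL _
        have IHH := IH H (card_erase_lt hq) hSLH
        have hvH0 : 0 ≤ v H := v_nonneg hSLH
        have hvHle := le_max_elim IHH.2.2.2.2.2.1
        have htbH : tb H = 8 := by
          apply tb_of_eight hH0
          · rintro (⟨d, _, hdm⟩ | hnl)
            · exact hchain d (Multiset.mem_of_mem_erase hdm)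
            · obtain ⟨r, hr⟩ := Multiset.exists_mem_of_ne_zero hH0
              cases r with
              | chain d => exact hchain d (Multiset.mem_of_mem_erase hr)
              | loop m => exact hnl m hr
          · intro d hd; exact hchain d (Multiset.mem_of_mem_erase hd)
        have h3 : cv H = fcv H + tb H := rfl
        refine le_max_of_le_right ?_
        rcases abs_cases (v H - 4) with ⟨he, _⟩ | ⟨he, _⟩ <;> omega
/-- C4: the target claim. -/
lemma step_C4 {G : Multiset Comp} (hSL : IsSimpleLoony G)
    (IH : ∀ H : Multiset Comp, Multiset.card H < Multiset.card G → IsSimpleLoony H → Claims H)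
    (h2 : 2 ≤ G.count (Comp.chain 3)) (hcv : cv G < 2) :
    (cv G % 2 ≠ 0 → v G = 1) ∧
    (cv G % 2 = 0 →
      ((Comp.loop 4 ∈ G ∧ cv (G.erase (Comp.loop 4)) = 4) → v G = 0) ∧
      (¬(Comp.loop 4 ∈ G ∧ cv (G.erase (Comp.loop 4)) = 4) → v G = 2)) := by
  have h3m : Comp.chain 3 ∈ G := by
    rw [← Multiset.count_pos]; omega
  have hG0 : G ≠ 0 := ne_zero_of_mem h3m
  set G3 := G.erase (Comp.chain 3) with hG3
  have h3G3 : Comp.chain 3 ∈ G3 := by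
    rw [hG3, ← Multiset.count_pos, Multiset.count_erase_self]; omega
  have hSLG3 : IsSimpleLoony G3 := SL_of_erase hSL _
  have hNCG3 : ¬ NoChain G3 := fun h => h 3 h3G3
  have hcvG3 : cv G3 = cv G + 1 := cv_erase_chain3 h3m hNCG3
  have IHG3 := IH G3 (card_erase_lt h3m) hSLG3
  have hparG3 : (v G3 - cv G3) % 2 = 0 := IHG3.2.1
  have hL8G3 : v G3 ≤ 3 ∨ v G3 ≤ cv G3 := le_max_elim (IHG3.2.2.2.2.1 h3G3)
  have hC1G3 : cv G3 ≤ v G3 := IHG3.1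
  have hv0G3 : 0 ≤ v G3 := v_nonneg hSLG3
  have hcandG3 := v_le_of_mem hSL h3m
  simp only [cand, ← hG3] at hcandG3
  -- facts about the 4-loop subgame, when a 4-loop exists
  have H4facts : Comp.loop 4 ∈ G →
      (v (G.erase (Comp.loop 4)) - cv G) % 2 = 0 ∧
      cv (G.erase (Comp.loop 4)) ≤ v (G.erase (Comp.loop 4)) ∧
      (v (G.erase (Comp.loop 4)) ≤ 3 ∨
        v (G.erase (Comp.loop 4)) ≤ cv (G.erase (Comp.loop 4))) := by
    intro h4
    set H4 := G.erase (Comp.loop 4) with hH4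
    have hSLH4 : IsSimpleLoony H4 := SL_of_erase hSL _
    have h3H4 : Comp.chain 3 ∈ H4 := by
      rw [hH4, ← Multiset.count_pos, Multiset.count_erase_of_ne (chain_ne_loop 3 4)]; omega
    have IHH4 := IH H4 (card_erase_lt h4) hSLH4
    have hfcvH4 : fcv H4 = fcv G + 4 := by rw [hH4, fcv_erase h4]; simp only [wt]; ring
    have hpar : (v H4 - cv H4) % 2 = 0 := IHH4.2.1
    have htbG := tb_even G
    have htbH4 := tb_even H4
    have e1 : cv G = fcv G + tb G := rfl
    have e2 : cv H4 = fcv H4 + tb H4 := rfl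
    refine ⟨by omega, IHH4.1, le_max_elim (IHH4.2.2.2.2.1 h3H4)⟩
  constructor
  · -- odd case
    intro hodd
    have hodd1 : cv G % 2 = 1 := by omega
    -- lower bound : all candidates ≥ 1
    have hlow : 1 ≤ v G := by
      apply v_ge hSL hG0
      intro p hp
      cases p with
      | chain c =>
        have hc3 : (3:ℤ) ≤ c := hSL _ hp
        have := abs_nonneg (v (G.erase (Comp.chain c)) - 2)
        simp only [cand]; omega
      | loop l =>
        obtain ⟨hl4, hlev⟩ : (4:ℤ) ≤ l ∧ Even l := hSL _ hp
        rw [Int.even_iff] at hlev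
        rcases eq_or_ne l 4 with rfl | hne
        · obtain ⟨hp4, _, _⟩ := H4facts hp
          have : v (G.erase (Comp.loop 4)) ≠ 4 := by omega
          simp only [cand]
          rcases abs_cases (v (G.erase (Comp.loop 4)) - 4) with ⟨he, _⟩ | ⟨he, _⟩ <;> omega
        · have := abs_nonneg (v (G.erase (Comp.loop l)) - 4)
          simp only [cand]; omega
    -- upper bound
    have hup : v G ≤ 1 := by
      by_cases hcv1 : cv G = 1
      · have hvG3 : v G3 = 2 := by rcases hL8G3 with h | h <;> omega
        rw [hvG3] at hcandG3
        norm_num at hcandG3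
        exact hcandG3
      · have hcvle : cv G ≤ -1 := by omega
        have hd : v G3 = 0 ∨ v G3 = 2 := by rcases hL8G3 with h | h <;> omega
        rcases hd with hd | hd
        · -- v G3 = 0 : the minimum there is attained by a 4-loop with inner value 4
          have hG30 : G3 ≠ 0 := ne_zero_of_mem h3G3
          obtain ⟨q, hq, hqv⟩ := (v_spec hSLG3 hG30).1
          rw [hd] at hqv
          cases q with
          | chain e =>
            exfalso
            have he3 : (3:ℤ) ≤ e := hSLG3 _ hq
            have := abs_nonneg (v (G3.erase (Comp.chain e)) - 2)
            simp only [cand] at hqv; omega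
          | loop m =>
            obtain ⟨hm4, hmev⟩ : (4:ℤ) ≤ m ∧ Even m := hSLG3 _ hq
            simp only [cand] at hqv
            have habs := abs_nonneg (v (G3.erase (Comp.loop m)) - 4)
            have hm : m = 4 := by omega
            subst hm
            have hvK : v (G3.erase (Comp.loop 4)) = 4 := by
              rcases abs_cases (v (G3.erase (Comp.loop 4)) - 4) with ⟨he, _⟩ | ⟨he, _⟩ <;> omega
            set K := G3.erase (Comp.loop 4) with hK
            have hSLK : IsSimpleLoony K := SL_of_erase hSLG3 _
            have h3K : Comp.chain 3 ∈ K := by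
              rw [hK, ← Multiset.count_pos, Multiset.count_erase_of_ne (chain_ne_loop 3 4),
                hG3, Multiset.count_erase_self]
              omega
            have hcardK : Multiset.card K < Multiset.card G :=
              lt_trans (card_erase_lt hq) (card_erase_lt h3m)
            have IHK := IH K hcardK hSLK
            have hcvK : cv K = 4 := by
              have ha := le_max_elim (IHK.2.2.2.2.1 h3K)
              have := IHK.1
              rcases ha with h | h <;> omega
            -- now the 4-loop in G
            have h4G : Comp.loop 4 ∈ G := Multiset.mem_of_mem_erase (hG3 ▸ hq)
            set H4 := G.erase (Comp.loop 4) with hH4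
            have hcomm : H4.erase (Comp.chain 3) = K := by
              rw [hH4, hK, hG3]; exact Multiset.erase_comm _ _ _
            have hSLH4 : IsSimpleLoony H4 := SL_of_erase hSL _
            have h3H4 : Comp.chain 3 ∈ H4 := by
              rw [hH4, ← Multiset.count_pos, Multiset.count_erase_of_ne (chain_ne_loop 3 4)]
              omega
            have hNCK : ¬ NoChain (H4.erase (Comp.chain 3)) := by
              rw [hcomm]; exact fun h => h 3 h3K
            have hcvH4 : cv H4 = 3 := by
              have := cv_erase_chain3 h3H4 hNCK
              rw [hcomm, hcvK] at this
              omega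
            have IHH4 := IH H4 (card_erase_lt h4G) hSLH4
            have hvH4 : v H4 = 3 := by
              have ha := le_max_elim (IHH4.2.2.2.2.1 h3H4)
              have := IHH4.1
              rcases ha with h | h <;> omega
            have hcand4 := v_le_of_mem hSL h4G
            simp only [cand, ← hH4, hvH4] at hcand4
            norm_num at hcand4
            exact hcand4
        · rw [hd] at hcandG3
          norm_num at hcandG3
          exact hcandG3
    omega
  · -- even case
    intro hev
    constructor
    · -- special case : v = 0
      rintro ⟨h4, hsp⟩
      have hlow : 0 ≤ v G := v_nonneg hSL
      obtain ⟨_, hC1H4, hL8H4⟩ := H4facts h4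
      have hvH4 : v (G.erase (Comp.loop 4)) = 4 := by
        rcases hL8H4 with h | h <;> omega
      have hcand4 := v_le_of_mem hSL h4
      simp only [cand, hvH4] at hcand4
      norm_num at hcand4
      omega
    · -- non-special case : v = 2
      intro hns
      have hlow : 2 ≤ v G := by
        apply v_ge hSL hG0
        intro p hp
        cases p with
        | chain c =>
          have hc3 : (3:ℤ) ≤ c := hSL _ hp
          rcases eq_or_ne c 3 with rfl | hne
          · -- v G3 is odd
            have : v G3 % 2 = 1 := by omega
            have hne2 : v G3 ≠ 2 := by omega
            simp only [cand, ← hG3]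
            rcases abs_cases (v G3 - 2) with ⟨he, _⟩ | ⟨he, _⟩ <;> omega
          · have := abs_nonneg (v (G.erase (Comp.chain c)) - 2)
            simp only [cand]; omega
        | loop l =>
          obtain ⟨hl4, hlev⟩ : (4:ℤ) ≤ l ∧ Even l := hSL _ hp
          rw [Int.even_iff] at hlev
          rcases eq_or_ne l 4 with rfl | hne
          · obtain ⟨hp4, hC1H4, hL8H4⟩ := H4facts hp
            have hne4 : v (G.erase (Comp.loop 4)) ≠ 4 := by
              intro hveq
              have hcvH4 : cv (G.erase (Comp.loop 4)) = 4 := by omega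
              exact hns ⟨hp, hcvH4⟩
            simp only [cand]
            rcases abs_cases (v (G.erase (Comp.loop 4)) - 4) with ⟨he, _⟩ | ⟨he, _⟩ <;> omega
          · have := abs_nonneg (v (G.erase (Comp.loop l)) - 4)
            simp only [cand]; omega
      have hup : v G ≤ 2 := by
        have hd : v G3 = 1 ∨ v G3 = 3 := by rcases hL8G3 with h | h <;> omega
        rcases hd with hd | hd <;> rw [hd] at hcandG3 <;> norm_num at hcandG3 <;> omega
      omega
theorem master : ∀ (n : ℕ) (G : Multiset Comp), Multiset.card G ≤ n → IsSimpleLoony G →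
    Claims G := by
  intro n
  induction n with
  | zero =>
    intro G hc _
    have : G = 0 := by
      rw [← Multiset.card_eq_zero]; omega
    subst this
    exact claims_zero
  | succ n IHn =>
    intro G hc hSL
    rcases eq_or_ne G 0 with rfl | hG0
    · exact claims_zero
    have IH : ∀ H : Multiset Comp, Multiset.card H < Multiset.card G → IsSimpleLoony H →
        Claims H := fun H hH hSLH => IHn H (by omega) hSLH
    exact ⟨step_C1 hSL hG0 IH, step_C2 hSL hG0 IH,
      fun L hL hGL => step_C6 hSL IH L hL hGL,
      fun c L hc4 hL hGL => step_C7 hSL IH c L hc4 hL hGL,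
      fun h3 => step_L8 hSL IH h3, step_C3 hSL hG0 IH,
      fun h2 hcv => step_C4 hSL IH h2 hcv⟩

theorem stmt16 (G : Multiset Comp) (hG : IsSimpleLoony G)
    (h3 : 2 ≤ G.count (Comp.chain 3)) (hcv : cv G < 2) :
    (Odd (cv G) → v G = 1) ∧
    (Even (cv G) →
      ((Comp.loop 4 ∈ G ∧ cv (G.erase (Comp.loop 4)) = 4) → v G = 0) ∧
      (¬ (Comp.loop 4 ∈ G ∧ cv (G.erase (Comp.loop 4)) = 4) → v G = 2)) := by
  have hcl := (master (Multiset.card G) G le_rfl hG).2.2.2.2.2.2 h3 hcv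
  constructor
  · intro hodd
    exact hcl.1 (by rw [Int.odd_iff] at hodd; omega)
  · intro hev
    exact hcl.2 (Int.even_iff.mp hev)
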